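/- arXiv:2408.01336 — 3 statements merged into one kernel-verified Lean document; each statement's English description precedes it below -/
import Mathlib

section
/- Let $\mathbf{z} \in \mathbb{R}^d$ be a random vector with $\max_{1\le j\le d} \mathbb{E}\mathbf{z}_j^4 \le \sigma^4$, and let $\tilde{\mathbf{z}}$ be its coordinate-wise truncation at level $\tau>0$. Then for any fixed vector $\mathbf{v} \in \mathbb{R}^d$, $-\frac{4\sigma^4}{\tau^2}\|\mathbf{v}\|_1^2 + \mathbb{E}\langle \mathbf{z},\mathbf{v}\rangle^2 \le \mathbb{E}\langle\tilde{\mathbf{z}},\mathbf{v}\rangle^2 \le \frac{4\sigma^4}{\tau^2}\|\mathbf{v}\|_1^2 + \mathbb{E}\langle \mathbf{z},\mathbf{v}\rangle^2$. -/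
open MeasureTheory

lemma real_sign_measurable : Measurable Real.sign := by
  have : Real.sign = fun r : ℝ => if r < 0 then (-1:ℝ) else if 0 < r then 1 else 0 :=
    funext fun r => rfl
  rw [this]
  exact Measurable.ite (measurableSet_lt measurable_id measurable_const) measurable_const
    (Measurable.ite (measurableSet_lt measurable_const measurable_id) measurable_const
      measurable_const)

lemma real_sign_mul_abs (a : ℝ) : Real.sign a * |a| = a := by
  rcases lt_trichotomy a 0 with h | h | h
  · rw [Real.sign_of_neg h, abs_of_neg h]; ring
  · simp [h]
  · rw [Real.sign_of_pos h, abs_of_pos h]; ring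

lemma real_abs_sign_le (a : ℝ) : |Real.sign a| ≤ 1 := by
  rcases lt_trichotomy a 0 with h | h | h
  · rw [Real.sign_of_neg h]; norm_num
  · simp [h, Real.sign_zero]
  · rw [Real.sign_of_pos h]; norm_num

lemma trunc_abs_le {τ : ℝ} (hτ : 0 ≤ τ) (a : ℝ) :
    abs (Real.sign a * min τ |a|) ≤ min τ |a| := by
  have hm : 0 ≤ min τ |a| := le_min hτ (abs_nonneg a)
  rw [abs_mul, abs_of_nonneg hm]
  nlinarith [real_abs_sign_le a, abs_nonneg (Real.sign a)]

lemma trunc_sub {τ : ℝ} (hτ : 0 < τ) (a : ℝ) :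
    τ ^ 2 * |Real.sign a * min τ |a| - a| ≤ |a| ^ 3 := by
  rcases le_or_gt |a| τ with h | h
  · rw [min_eq_right h, real_sign_mul_abs, sub_self, abs_zero, mul_zero]
    positivity
  · rw [min_eq_left h.le]
    have e1 : Real.sign a * τ - a = Real.sign a * (τ - |a|) := by
      nth_rewrite 2 [← real_sign_mul_abs a]; ring
    have e2 : |Real.sign a * τ - a| ≤ |a| - τ := by
      rw [e1, abs_mul]
      have e3 : |(τ - |a|)| = |a| - τ := by rw [abs_of_nonpos (by linarith)]; ring
      rw [e3]
      nlinarith [real_abs_sign_le a, abs_nonneg (Real.sign a)]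
    have hpos : 0 < |a| := lt_trans hτ h
    nlinarith [mul_le_mul_of_nonneg_left e2 (sq_nonneg τ),
      mul_pos (mul_pos (sub_pos.mpr h) hpos) (by linarith : (0:ℝ) < |a| + τ),
      mul_pos hτ (mul_pos hτ hτ)]

lemma four_bound {x y : ℝ} (hx : 0 ≤ x) (hy : 0 ≤ y) :
    x ^ 3 * y + x * y ^ 3 ≤ x ^ 4 + y ^ 4 := by
  nlinarith [sq_nonneg (x - y), sq_nonneg (x + y), mul_nonneg hx hy, sq_nonneg (x*y),
    mul_nonneg (mul_nonneg hx hx) (mul_nonneg hy hy)]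

lemma prod_bound {τ a b ta tb : ℝ} (hτ : 0 < τ) (hta : |ta| ≤ |a|) (htb : |tb| ≤ |b|)
    (h1 : τ ^ 2 * |ta - a| ≤ |a| ^ 3) (h2 : τ ^ 2 * |tb - b| ≤ |b| ^ 3) :
    |ta * tb - a * b| ≤ (a ^ 4 + b ^ 4) / τ ^ 2 := by
  have hτ2 : (0:ℝ) < τ ^ 2 := by positivity
  rw [le_div_iff₀ hτ2]
  have key : |ta * tb - a * b| ≤ |ta - a| * |tb| + |a| * |tb - b| := by
    have e : ta * tb - a * b = (ta - a) * tb + a * (tb - b) := by ring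
    rw [e]
    refine (abs_add_le _ _).trans ?_
    rw [abs_mul, abs_mul]
  have s1 : τ ^ 2 * |ta - a| * |tb| ≤ |a| ^ 3 * |b| :=
    mul_le_mul h1 htb (abs_nonneg tb) (by positivity)
  have s2 : |a| * (τ ^ 2 * |tb - b|) ≤ |a| * |b| ^ 3 :=
    mul_le_mul_of_nonneg_left h2 (abs_nonneg a)
  have s3 : |a| ^ 3 * |b| + |a| * |b| ^ 3 ≤ a ^ 4 + b ^ 4 := by
    have := four_bound (abs_nonneg a) (abs_nonneg b)
    have ha4 : |a| ^ 4 = a ^ 4 := by rw [← abs_pow, abs_of_nonneg (by positivity)]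
    have hb4 : |b| ^ 4 = b ^ 4 := by rw [← abs_pow, abs_of_nonneg (by positivity)]
    linarith [this, ha4.le, hb4.le, ha4.ge, hb4.ge]
  nlinarith [mul_le_mul_of_nonneg_right key hτ2.le]

lemma trunc_prod {τ : ℝ} (hτ : 0 < τ) (a b : ℝ) :
    |Real.sign a * min τ |a| * (Real.sign b * min τ |b|) - a * b| ≤ (a ^ 4 + b ^ 4) / τ ^ 2 :=
  prod_bound hτ ((trunc_abs_le hτ.le a).trans (min_le_right _ _))
    ((trunc_abs_le hτ.le b).trans (min_le_right _ _)) (trunc_sub hτ a) (trunc_sub hτ b)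

theorem stmt2 {Ω : Type*} [MeasurableSpace Ω] (μ : Measure Ω) [IsProbabilityMeasure μ]
    (d : ℕ) (z : Ω → Fin d → ℝ) (hz : Measurable z) (σ τ : ℝ) (hτ : 0 < τ) (hσ : 0 ≤ σ)
    (hmom : ∀ j, ∫ ω, (z ω j) ^ 4 ∂μ ≤ σ ^ 4)
    (hmomint : ∀ j, Integrable (fun ω => (z ω j) ^ 4) μ)
    (hint : ∀ j k, Integrable (fun ω => z ω j * z ω k) μ)
    (v : Fin d → ℝ) :
    -(4 * σ ^ 4 / τ ^ 2) * (∑ j, |v j|) ^ 2 + ∫ ω, (∑ j, z ω j * v j) ^ 2 ∂μ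
      ≤ ∫ ω, (∑ j, (Real.sign (z ω j) * min τ |z ω j|) * v j) ^ 2 ∂μ ∧
    ∫ ω, (∑ j, (Real.sign (z ω j) * min τ |z ω j|) * v j) ^ 2 ∂μ
      ≤ 4 * σ ^ 4 / τ ^ 2 * (∑ j, |v j|) ^ 2 + ∫ ω, (∑ j, z ω j * v j) ^ 2 ∂μ := by
  have hzj : ∀ j, Measurable fun ω => z ω j := fun j => (measurable_pi_apply j).comp hz
  have htj : ∀ j, Measurable fun ω => Real.sign (z ω j) * min τ |z ω j| := fun j =>
    (real_sign_measurable.comp (hzj j)).mul (measurable_const.min (hzj j).abs)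
  have hτ2 : (0:ℝ) < τ ^ 2 := by positivity
  -- integrability of truncated products
  have htint : ∀ j k, Integrable
      (fun ω => (Real.sign (z ω j) * min τ |z ω j|) * (Real.sign (z ω k) * min τ |z ω k|)) μ := by
    intro j k
    refine Integrable.mono' (integrable_const (τ ^ 2))
      (((htj j).mul (htj k)).aestronglyMeasurable) ?_
    filter_upwards with ω
    have h1 : abs (Real.sign (z ω j) * min τ |z ω j|) ≤ τ :=
      (trunc_abs_le hτ.le _).trans (min_le_left _ _)
    have h2 : abs (Real.sign (z ω k) * min τ |z ω k|) ≤ τ :=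
      (trunc_abs_le hτ.le _).trans (min_le_left _ _)
    rw [Real.norm_eq_abs, abs_mul, sq]
    exact mul_le_mul h1 h2 (abs_nonneg _) hτ.le
  -- per-pair difference bound
  have hdiff : ∀ j k,
      |(∫ ω, (Real.sign (z ω j) * min τ |z ω j|) * (Real.sign (z ω k) * min τ |z ω k|) ∂μ)
        - ∫ ω, z ω j * z ω k ∂μ| ≤ 2 * σ ^ 4 / τ ^ 2 := by
    intro j k
    rw [← integral_sub (htint j k) (hint j k)]
    have step1 : |∫ ω, ((Real.sign (z ω j) * min τ |z ω j|) * (Real.sign (z ω k) * min τ |z ω k|)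
        - z ω j * z ω k) ∂μ| ≤ ∫ ω, |(Real.sign (z ω j) * min τ |z ω j|) *
          (Real.sign (z ω k) * min τ |z ω k|) - z ω j * z ω k| ∂μ := by
      simpa [Real.norm_eq_abs] using
        norm_integral_le_integral_norm (μ := μ)
          (f := fun ω => (Real.sign (z ω j) * min τ |z ω j|) *
            (Real.sign (z ω k) * min τ |z ω k|) - z ω j * z ω k)
    refine step1.trans ?_
    have step2 : ∫ ω, |(Real.sign (z ω j) * min τ |z ω j|) *
        (Real.sign (z ω k) * min τ |z ω k|) - z ω j * z ω k| ∂μ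
        ≤ ∫ ω, ((z ω j) ^ 4 + (z ω k) ^ 4) / τ ^ 2 ∂μ := by
      refine integral_mono ((htint j k).sub (hint j k)).abs
        (((hmomint j).add (hmomint k)).div_const _) ?_
      intro ω
      exact trunc_prod hτ (z ω j) (z ω k)
    refine step2.trans ?_
    rw [integral_div, integral_add (hmomint j) (hmomint k)]
    have := hmom j
    have := hmom k
    rw [div_le_div_iff₀ hτ2 hτ2]
    nlinarith [hmom j, hmom k]
  -- expansion of the square of a sum
  have expand : ∀ (w : Ω → Fin d → ℝ), (∀ j k, Integrable (fun ω => w ω j * w ω k) μ) →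
      ∫ ω, (∑ j, w ω j * v j) ^ 2 ∂μ
        = ∑ j, ∑ k, v j * v k * ∫ ω, w ω j * w ω k ∂μ := by
    intro w hw
    have e1 : ∀ ω, (∑ j, w ω j * v j) ^ 2 = ∑ j, ∑ k, v j * v k * (w ω j * w ω k) := by
      intro ω
      rw [sq, Finset.sum_mul_sum]
      exact Finset.sum_congr rfl fun j _ => Finset.sum_congr rfl fun k _ => by ring
    simp_rw [e1]
    rw [integral_finset_sum _ (fun j _ =>
      integrable_finset_sum _ (fun k _ => ((hw j k).const_mul _)))]
    refine Finset.sum_congr rfl fun j _ => ?_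
    rw [integral_finset_sum _ (fun k _ => (hw j k).const_mul _)]
    exact Finset.sum_congr rfl fun k _ => integral_const_mul _ _
  have hE1 := expand z hint
  have hE2 := expand (fun ω j => Real.sign (z ω j) * min τ |z ω j|) htint
  -- global bound
  have hbound : |(∫ ω, (∑ j, (Real.sign (z ω j) * min τ |z ω j|) * v j) ^ 2 ∂μ)
      - ∫ ω, (∑ j, z ω j * v j) ^ 2 ∂μ| ≤ 2 * σ ^ 4 / τ ^ 2 * (∑ j, |v j|) ^ 2 := by
    rw [hE1, hE2, ← Finset.sum_sub_distrib]
    simp_rw [← Finset.sum_sub_distrib, ← mul_sub]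
    calc |∑ j, ∑ k, v j * v k *
          ((∫ ω, (Real.sign (z ω j) * min τ |z ω j|) * (Real.sign (z ω k) * min τ |z ω k|) ∂μ)
            - ∫ ω, z ω j * z ω k ∂μ)|
        ≤ ∑ j, ∑ k, |v j * v k *
          ((∫ ω, (Real.sign (z ω j) * min τ |z ω j|) * (Real.sign (z ω k) * min τ |z ω k|) ∂μ)
            - ∫ ω, z ω j * z ω k ∂μ)| := by
          refine (Finset.abs_sum_le_sum_abs _ _).trans ?_
          exact Finset.sum_le_sum fun j _ => Finset.abs_sum_le_sum_abs _ _
      _ ≤ ∑ j, ∑ k, |v j| * |v k| * (2 * σ ^ 4 / τ ^ 2) := by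
          refine Finset.sum_le_sum fun j _ => Finset.sum_le_sum fun k _ => ?_
          rw [abs_mul, abs_mul]
          exact mul_le_mul_of_nonneg_left (hdiff j k)
            (mul_nonneg (abs_nonneg _) (abs_nonneg _))
      _ = 2 * σ ^ 4 / τ ^ 2 * (∑ j, |v j|) ^ 2 := by
          have hs : (∑ j, |v j|) ^ 2 = ∑ j, ∑ k, |v j| * |v k| := by
            rw [sq, Finset.sum_mul_sum]
          rw [hs, Finset.mul_sum]
          refine Finset.sum_congr rfl fun j _ => ?_
          rw [Finset.mul_sum]
          exact Finset.sum_congr rfl fun k _ => by ring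
  have hA : (0:ℝ) ≤ (∑ j, |v j|) ^ 2 := by positivity
  have h24 : 2 * σ ^ 4 / τ ^ 2 * (∑ j, |v j|) ^ 2 ≤ 4 * σ ^ 4 / τ ^ 2 * (∑ j, |v j|) ^ 2 := by
    have h0 : (0:ℝ) ≤ 2 * σ ^ 4 / τ ^ 2 * (∑ j, |v j|) ^ 2 := by positivity
    have hkey : 4 * σ ^ 4 / τ ^ 2 * (∑ j, |v j|) ^ 2
        - 2 * σ ^ 4 / τ ^ 2 * (∑ j, |v j|) ^ 2
        = 2 * σ ^ 4 / τ ^ 2 * (∑ j, |v j|) ^ 2 := by ring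
    linarith
  obtain ⟨hl, hr⟩ := abs_le.mp hbound
  constructor <;> linarith
end

section
/- Let $\mathbf{v}\in\mathbb{R}^d$, $1\le s < d$, and let $\mathbf{v}^{\#1}$, $\mathbf{v}^{\#2}$ be the top-$s$ and bottom-$(d-s)$ parts of the non-increasing rearrangement of $|\mathbf{v}|$. If $\|\mathbf{v}\|_1 \le \sqrt{s}\,\|\mathbf{v}\|_2$, then $\|\mathbf{v}\|_2 \le 2\|\mathbf{v}^{\#1}\|_2$. -/
/-- If `‖v‖₁ ≤ √s ‖v‖₂`, then `‖v‖₂ ≤ 2 ‖v^{#1}‖₂` where `v^{#1}` consists of the `s`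
largest entries (in absolute value), encoded via the non-increasing rearrangement `w`. -/
theorem stmt6 (d s : ℕ) (hs : 1 ≤ s) (hsd : s < d)
    (v : Fin d → ℝ) (w : Fin d → ℝ) (e : Equiv.Perm (Fin d))
    (hw : ∀ i, w i = |v (e i)|) (hmono : Antitone w)
    (hyp : (∑ i, |v i|) ≤ Real.sqrt s * Real.sqrt (∑ i, (v i) ^ 2)) :
    Real.sqrt (∑ i, (v i) ^ 2)
      ≤ 2 * Real.sqrt (∑ i ∈ Finset.univ.filter (fun i : Fin d => (i : ℕ) < s), (w i) ^ 2) := by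
  set T := ∑ i, (v i) ^ 2 with hT
  have hT0 : 0 ≤ T := Finset.sum_nonneg fun i _ => sq_nonneg _
  have hwnn : ∀ i, 0 ≤ w i := fun i => (hw i) ▸ abs_nonneg _
  set F := Finset.univ.filter (fun i : Fin d => (i : ℕ) < s) with hF
  set Fc := Finset.univ.filter (fun i : Fin d => ¬ (i : ℕ) < s) with hFc
  have hsum2 : ∑ i, (w i) ^ 2 = T := by
    rw [hT, ← Equiv.sum_comp e (fun i => (v i) ^ 2)]
    exact Finset.sum_congr rfl fun i _ => by rw [hw i, sq_abs]
  have hsum1 : ∑ i, w i = ∑ i, |v i| := by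
    rw [← Equiv.sum_comp e (fun i => |v i|)]
    exact Finset.sum_congr rfl fun i _ => hw i
  set S1 := ∑ i ∈ F, (w i) ^ 2 with hS1
  set S2 := ∑ i ∈ Fc, (w i) ^ 2 with hS2
  have hS10 : 0 ≤ S1 := Finset.sum_nonneg fun i _ => sq_nonneg _
  have hsplit : S1 + S2 = T := by
    rw [hS1, hS2, Finset.sum_filter_add_sum_filter_not, hsum2]
  set A := Real.sqrt T with hA
  set B := Real.sqrt S1 with hB
  have hA0 : 0 ≤ A := Real.sqrt_nonneg _
  have hB0 : 0 ≤ B := Real.sqrt_nonneg _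
  have hA2 : A ^ 2 = T := Real.sq_sqrt hT0
  have hB2 : B ^ 2 = S1 := Real.sq_sqrt hS10
  -- card of F is s
  have hcard : F.card = s := by
    have : F = Finset.Iio (⟨s, hsd⟩ : Fin d) := by
      ext i
      simp [hF, Finset.mem_Iio, Fin.lt_def]
    rw [this, Fin.card_Iio]
  set P := ∑ i ∈ F, w i with hP
  set Q := ∑ i ∈ Fc, w i with hQ
  have hP0 : 0 ≤ P := Finset.sum_nonneg fun i _ => hwnn i
  have hQ0 : 0 ≤ Q := Finset.sum_nonneg fun i _ => hwnn i
  have hs0 : (0:ℝ) < s := by exact_mod_cast hs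
  -- each tail entry is at most P / s
  have hkey : ∀ i ∈ Fc, (s : ℝ) * w i ≤ P := by
    intro i hi
    have hi' : s ≤ (i : ℕ) := by
      simpa [hFc] using hi
    calc (s : ℝ) * w i = ∑ _j ∈ F, w i := by rw [Finset.sum_const, hcard, nsmul_eq_mul]
      _ ≤ P := Finset.sum_le_sum fun j hj => by
          apply hmono
          have hj' : (j : ℕ) < s := by simpa [hF] using hj
          exact Fin.le_def.mpr (le_trans hj'.le hi')
  have hS2le : S2 ≤ P * Q / s := by
    have : S2 ≤ ∑ i ∈ Fc, (P / s) * w i := by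
      apply Finset.sum_le_sum
      intro i hi
      have := hkey i hi
      have hwi := hwnn i
      rw [pow_two, div_mul_eq_mul_div, le_div_iff₀ hs0]
      nlinarith [hwnn i]
    calc S2 ≤ ∑ i ∈ Fc, (P / s) * w i := this
      _ = P * Q / s := by rw [← Finset.mul_sum, ← hQ]; ring
  -- Cauchy: P ≤ √s * B
  have hPB : P ≤ Real.sqrt s * B := by
    have h1 : P ^ 2 ≤ (s : ℝ) * S1 := by
      have := sq_sum_le_card_mul_sum_sq (s := F) (f := w)
      rw [hcard] at this
      exact_mod_cast this
    have := Real.sqrt_le_sqrt h1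
    rwa [Real.sqrt_sq hP0, Real.sqrt_mul (le_of_lt hs0)] at this
  have hQA : Q ≤ Real.sqrt s * A := by
    have h1 : Q ≤ ∑ i, w i :=
      Finset.sum_le_sum_of_subset_of_nonneg (Finset.filter_subset _ _) (fun i _ _ => hwnn i)
    rw [hsum1] at h1
    exact h1.trans hyp
  have hss : Real.sqrt s * Real.sqrt s = (s : ℝ) := Real.mul_self_sqrt (le_of_lt hs0)
  have hS2BA : S2 ≤ B * A := by
    have h1 : P * Q ≤ (Real.sqrt s * B) * (Real.sqrt s * A) :=
      mul_le_mul hPB hQA hQ0 (by positivity)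
    have h2 : (Real.sqrt s * B) * (Real.sqrt s * A) = s * (B * A) := by
      rw [mul_mul_mul_comm, hss]
    have h3 : P * Q / s ≤ B * A := by
      rw [div_le_iff₀ hs0]
      nlinarith
    exact hS2le.trans h3
  have hmain : A ^ 2 ≤ B ^ 2 + B * A := by
    rw [hA2, hB2, ← hsplit]
    linarith
  show A ≤ 2 * B
  clear_value A B T S1 S2 P Q
  nlinarith [hmain, hA0, hB0, sq_nonneg (A - 2 * B), sq_nonneg B, mul_nonneg hA0 hB0]
end

section
/- Let $a_i, b_i$ ($i=1,\dots,n$) be real numbers, and let $h$ be the Huber loss derivative. Suppose $|a_i| \le 1/2$ and $|b_i| \le 1/2$ hold for all $i$ in some subset $S \subseteq \{1,\dots,n\}$. Then $\sum_{i=1}^n\big(-h(a_i - b_i) + h(a_i)\big)b_i \ge \sum_{i\in S} b_i^2$. -/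
/-- The derivative of the Huber loss: `h t = t` for `|t| ≤ 1`, `sgn t` for `|t| > 1`. -/
noncomputable def huberDeriv (t : ℝ) : ℝ := max (-1) (min 1 t)

lemma huberDeriv_mono : Monotone huberDeriv := fun x y h => by
  unfold huberDeriv
  exact max_le_max le_rfl (min_le_min le_rfl h)

lemma huberDeriv_id {t : ℝ} (h : |t| ≤ 1) : huberDeriv t = t := by
  rw [abs_le] at h
  unfold huberDeriv
  rw [min_eq_right h.2, max_eq_right h.1]

theorem stmt19 (n : ℕ) (a b : Fin n → ℝ) (S : Finset (Fin n))
    (hS : ∀ i ∈ S, |a i| ≤ 1 / 2 ∧ |b i| ≤ 1 / 2) :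
    ∑ i, (-huberDeriv (a i - b i) + huberDeriv (a i)) * b i ≥ ∑ i ∈ S, (b i) ^ 2 := by
  have key : ∀ i ∈ S, (b i) ^ 2 = (-huberDeriv (a i - b i) + huberDeriv (a i)) * b i := by
    intro i hi
    obtain ⟨ha, hb⟩ := hS i hi
    have h1 : |a i - b i| ≤ 1 := by
      calc |a i - b i| ≤ |a i| + |b i| := abs_sub _ _
        _ ≤ 1 := by linarith
    rw [huberDeriv_id h1, huberDeriv_id (by linarith)]
    ring
  rw [Finset.sum_congr rfl key]
  apply Finset.sum_le_sum_of_subset_of_nonneg (Finset.subset_univ S)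
  intro i _ _
  rcases le_total (b i) 0 with h | h
  · have := huberDeriv_mono (by linarith : a i ≤ a i - b i)
    nlinarith
  · have := huberDeriv_mono (by linarith : a i - b i ≤ a i)
    nlinarith
end
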